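/- arXiv:cs/0608104 — 3 statements merged into one kernel-verified Lean document; each statement's English description precedes it below -/
import Mathlib

section
/- Liveness propagation: for a straight-line sequence s of statements, if access path ρᵃ is explicitly live at the point after s and T(s, ρᵃ) = ρᵇ with ρᵇ ≠ ε, then ρᵇ is explicitly live at the point before s. -/
abbrev APath := List ℕ

def prefixesOf (ρ : APath) : Set APath := {p | p <+: ρ ∧ p ≠ []}

/-- Statements: a use of α_y (directly generating Prefixes(ρ_y)), an assignment
α_x = α_y, or an assignment α_x = New/null. -/
inductive Stm where
  | use (ρy : APath)
  | assign (ρx ρy : APath)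
  | assignNew (ρx : APath)

/-- Explicit liveness flow function f_s(X) = (X − LKill_s) ∪ LDirect_s ∪ LTransfer_s(X). -/
def flow : Stm → Set APath → Set APath
  | .use ρy, X => X ∪ prefixesOf ρy
  | .assign ρx ρy, X =>
      (X \ {ρ | ρx <+: ρ}) ∪ prefixesOf ρx.dropLast ∪ prefixesOf ρy.dropLast
        ∪ {ρ | ∃ σ, ρ = ρy ++ σ ∧ ρx ++ σ ∈ X}
  | .assignNew ρx, X =>
      (X \ {ρ | ρx <+: ρ}) ∪ prefixesOf ρx.dropLast

/-- Liveness before a straight-line sequence of statements, given the set X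
of live paths after it. -/
def pathLive (X : Set APath) : List Stm → Set APath
  | [] => X
  | s :: rest => flow s (pathLive X rest)

/-- The backward transfer function T for a single statement (ε = [] absorbing). -/
def T : Stm → APath → APath
  | .use _, ρ => ρ
  | .assign ρx ρy, ρ =>
      if ρ = [] then [] else if ρx <+: ρ then ρy ++ ρ.drop ρx.length else ρ
  | .assignNew ρx, ρ =>
      if ρ = [] then [] else if ρx <+: ρ then [] else ρ

/-- T composed over a sequence of statements. -/
def Tlist : List Stm → APath → APath
  | [], ρ => ρ
  | s :: rest, ρ => T s (Tlist rest ρ)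


lemma T_nil (s : Stm) : T s [] = [] := by
  cases s <;> simp [T]

lemma step (s : Stm) (Y : Set APath) (ρc ρb : APath)
    (hc : ρc ∈ Y) (hT : T s ρc = ρb) (hne : ρb ≠ []) : ρb ∈ flow s Y := by
  cases s with
  | use ρy =>
    simp [T] at hT; subst hT; exact Or.inl hc
  | assign ρx ρy =>
    have hcne : ρc ≠ [] := by rintro rfl; simp [T] at hT; exact hne hT
    simp [T, hcne] at hT
    by_cases hp : ρx <+: ρc
    · simp [hp] at hT; subst hT
      right; exact ⟨ρc.drop ρx.length, rfl, by rwa [List.prefix_iff_eq_append.mp hp]⟩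
    · simp [hp] at hT; subst hT
      left; left; left; exact ⟨hc, hp⟩
  | assignNew ρx =>
    have hcne : ρc ≠ [] := by rintro rfl; simp [T] at hT; exact hne hT
    simp [T, hcne] at hT
    by_cases hp : ρx <+: ρc
    · simp [hp] at hT; exact absurd hT hne
    · simp [hp] at hT; subst hT; exact Or.inl ⟨hc, hp⟩

/-- Liveness propagation: if ρᵃ is explicitly live after a straight-line sequence
s of statements and T(s, ρᵃ) = ρᵇ ≠ ε, then ρᵇ is explicitly live before s. -/
theorem liveness_propagation (ss : List Stm) (X : Set APath) (ρa ρb : APath)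
    (ha : ρa ∈ X) (hT : Tlist ss ρa = ρb) (hne : ρb ≠ []) :
    ρb ∈ pathLive X ss := by
  induction ss generalizing ρb with
  | nil => simp [Tlist] at hT; subst hT; exact ha
  | cons s rest ih =>
    simp [Tlist] at hT
    have hcne : Tlist rest ρa ≠ [] := by
      intro h; rw [h, T_nil] at hT; exact hne hT.symm
    exact step s _ _ _ (ih _ rfl hcne) hT hne
end

section
/- Extension is safe: if G₂ = (G₁, M) # S, where S is a set of remainder graphs, then AP(G₂) ⊇ { ρ→σ | ρ ∈ AP(G₁, M), σ ∈ AP(S) }, i.e., the extended graph represents every concatenation of a path of G₁ ending in M with a path of some remainder graph in S. -/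
open Classical

/-- A graph with an entry node, edges and final nodes; used both for access graphs
(entry = root, representing no field) and remainder graphs (entry represents a
field name). Node fields are given by `fl : ν → Option ℕ` (`none` = summary). -/
structure Gph (ν : Type*) where
  entry : ν
  edges : Set (ν × ν)
  final : Set ν

def FMatch (o : Option ℕ) (f : ℕ) : Prop := o = none ∨ o = some f

/-- Paths of an access graph: the entry node contributes no field name. -/
inductive Reaches {ν : Type*} (fl : ν → Option ℕ) (G : Gph ν) : ν → List ℕ → Prop
  | entry : Reaches fl G G.entry []
  | step {n m : ν} {σ : List ℕ} {f : ℕ} :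
      Reaches fl G n σ → (n, m) ∈ G.edges → FMatch (fl m) f →
      Reaches fl G m (σ ++ [f])

/-- Paths of a remainder graph: the entry node itself corresponds to a field name. -/
inductive RReaches {ν : Type*} (fl : ν → Option ℕ) (R : Gph ν) : ν → List ℕ → Prop
  | entry {f : ℕ} : FMatch (fl R.entry) f → RReaches fl R R.entry [f]
  | step {n m : ν} {σ : List ℕ} {f : ℕ} :
      RReaches fl R n σ → (n, m) ∈ R.edges → FMatch (fl m) f →
      RReaches fl R m (σ ++ [f])

/-- AP(G, M): access paths represented by paths of G from the entry node ending at
a node in M. -/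
def AP {ν : Type*} (fl : ν → Option ℕ) (G : Gph ν) (M : Set ν) : Set (List ℕ) :=
  {σ | ∃ n ∈ M, Reaches fl G n σ}

/-- AP(S): the field sequences represented in the remainder graphs of S. -/
def APS {ν : Type*} (fl : ν → Option ℕ) (S : Set (Gph ν)) : Set (List ℕ) :=
  {σ | ∃ R ∈ S, ∃ n ∈ R.final, RReaches fl R n σ}

/-- Extension (G,M) # S: for each remainder graph R ∈ S, add the nodes and edges of
R together with an edge from every node of M to the entry of R, and take the
⊎-union; the empty graph when S = ∅. -/
noncomputable def extendSet {ν : Type*} (G : Gph ν) (M : Set ν) (S : Set (Gph ν)) :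
    Gph ν :=
  if S = ∅ then ⟨G.entry, ∅, ∅⟩
  else
    ⟨G.entry,
     G.edges ∪ ⋃ R ∈ S, (R.edges ∪ {p : ν × ν | p.1 ∈ M ∧ p.2 = R.entry}),
     G.final ∪ ⋃ R ∈ S, R.final⟩

/-- Safety of extension: if G₂ = (G₁,M) # S then
AP(G₂) ⊇ {ρ→σ | ρ ∈ AP(G₁,M), σ ∈ AP(S)}. -/
theorem extend_safe {ν : Type*} (fl : ν → Option ℕ) (G : Gph ν) (M : Set ν)
    (S : Set (Gph ν)) :
    {π | ∃ ρ ∈ AP fl G M, ∃ σ ∈ APS fl S, π = ρ ++ σ} ⊆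
      AP fl (extendSet G M S) (extendSet G M S).final := by
  rintro π ⟨ρ, ⟨n, hnM, hn⟩, σ, ⟨R, hRS, m, hmF, hm⟩, rfl⟩
  have hS : S ≠ ∅ := by rintro rfl; exact hRS
  set G₂ := extendSet G M S with hG₂
  have hdef : G₂ = ⟨G.entry,
     G.edges ∪ ⋃ R ∈ S, (R.edges ∪ {p : ν × ν | p.1 ∈ M ∧ p.2 = R.entry}),
     G.final ∪ ⋃ R ∈ S, R.final⟩ := by
    rw [hG₂, extendSet, if_neg hS]
  have hentry : G₂.entry = G.entry := by rw [hdef]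
  have hedge : ∀ p, p ∈ G.edges → p ∈ G₂.edges := by
    intro p hp; rw [hdef]; exact Or.inl hp
  have hRedge : ∀ p, p ∈ R.edges ∪ {p : ν × ν | p.1 ∈ M ∧ p.2 = R.entry} →
      p ∈ G₂.edges := by
    intro p hp; rw [hdef]
    exact Or.inr (Set.mem_biUnion hRS hp)
  -- lift Reaches from G to G₂
  have lift : ∀ {x τ}, Reaches fl G x τ → Reaches fl G₂ x τ := by
    intro x τ h
    induction h with
    | entry => rw [← hentry]; exact Reaches.entry
    | step h1 h2 h3 ih => exact Reaches.step ih (hedge _ h2) h3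
  have key : ∀ {x τ}, RReaches fl R x τ → Reaches fl G₂ x (ρ ++ τ) := by
    intro x τ h
    induction h with
    | entry hf =>
        exact Reaches.step (lift hn) (hRedge _ (Or.inr ⟨hnM, rfl⟩)) hf
    | step h1 h2 h3 ih =>
        rw [← List.append_assoc]
        exact Reaches.step ih (hRedge _ (Or.inl h2)) h3
  refine ⟨m, ?_, key hm⟩
  rw [hdef]
  exact Or.inr (Set.mem_biUnion hRS hmF)
end

section
/- Factorization followed by extension recovers extensions of paths: for access graphs G and G' with the same root and a set M of nodes of G', every access path of the form ρ'→σ ∈ AP(G) with ρ' ∈ AP(G', M) is represented in (G', M) # (G/(G', M)). -/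
open Classical

def FieldEq (a b : Option ℕ) : Prop := a = none ∨ b = none ∨ a = b

/-- The node correspondence ACN(G,G'). -/
inductive ACN {ν : Type*} (fl : ν → Option ℕ) (G G' : Gph ν) : ν → ν → Prop
  | entry : ACN fl G G' G.entry G'.entry
  | step {n m n' m' : ν} :
      ACN fl G G' n n' → (n, m) ∈ G.edges → (n', m') ∈ G'.edges →
      FieldEq (fl m) (fl m') → ACN fl G G' m m'

/-- Factorization G/(G',M): the set of remainder graphs G↾n_j for edges
n_i → n_j of G with n_i corresponding to some node of M under ACN(G,G'). -/
def factor {ν : Type*} (fl : ν → Option ℕ) (G G' : Gph ν) (M : Set ν) :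
    Set (Gph ν) :=
  {R | ∃ ni nj : ν, (ni, nj) ∈ G.edges ∧ (∃ m ∈ M, ACN fl G G' ni m) ∧
    R = ⟨nj, G.edges, G.final⟩}

/-- Path segments over an edge set. -/
inductive Seg {ν : Type*} (fl : ν → Option ℕ) (E : Set (ν × ν)) : ν → ν → List ℕ → Prop
  | nil (n : ν) : Seg fl E n n []
  | step {a b c : ν} {σ : List ℕ} {f : ℕ} :
      Seg fl E a b σ → (b, c) ∈ E → FMatch (fl c) f → Seg fl E a c (σ ++ [f])

lemma reaches_mono {ν : Type*} {fl : ν → Option ℕ} {G E : Gph ν}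
    (he : G.edges ⊆ E.edges) (hen : G.entry = E.entry) {n : ν} {σ : List ℕ}
    (h : Reaches fl G n σ) : Reaches fl E n σ := by
  induction h with
  | entry => rw [hen]; exact .entry
  | step _ he' hf ih => exact .step ih (he he') hf

lemma reaches_seg {ν : Type*} {fl : ν → Option ℕ} {E : Gph ν} {D : Set (ν × ν)}
    {k n : ν} {ρ σ : List ℕ} (hD : D ⊆ E.edges)
    (h2 : Seg fl D k n σ) (h1 : Reaches fl E k ρ) :
    Reaches fl E n (ρ ++ σ) := by
  induction h2 with
  | nil => simpa using h1
  | step _ he hf ih => rw [← List.append_assoc]; exact .step ih (hD he) hf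

lemma reaches_split {ν : Type*} {fl : ν → Option ℕ} {G : Gph ν} {n : ν} {τ : List ℕ}
    (h : Reaches fl G n τ) : ∀ ρ σ : List ℕ, τ = ρ ++ σ →
    ∃ k, Reaches fl G k ρ ∧ Seg fl G.edges k n σ := by
  induction h with
  | entry =>
    intro ρ σ hτ
    obtain ⟨rfl, rfl⟩ := List.append_eq_nil_iff.mp hτ.symm
    exact ⟨_, .entry, .nil _⟩
  | @step a b τ₀ f h he hf ih =>
    intro ρ σ hτ
    rcases σ.eq_nil_or_concat with rfl | ⟨σ', f', rfl⟩
    · rw [List.append_nil] at hτ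
      exact ⟨b, hτ ▸ Reaches.step h he hf, .nil _⟩
    · simp only [List.concat_eq_append, ← List.append_assoc] at hτ ⊢
      obtain ⟨h1, h2⟩ := List.append_inj' hτ rfl
      obtain rfl : f = f' := by simpa using h2
      obtain ⟨k, hk, hs⟩ := ih ρ σ' h1
      exact ⟨k, hk, .step hs he hf⟩

lemma seg_nil' {ν : Type*} {fl : ν → Option ℕ} {E : Set (ν × ν)} {a b : ν} {τ : List ℕ}
    (h : Seg fl E a b τ) (hτ : τ = []) : a = b := by
  cases h with
  | nil => rfl
  | step => simp at hτ

lemma seg_cons {ν : Type*} {fl : ν → Option ℕ} {E : Set (ν × ν)} {a b : ν} {τ : List ℕ}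
    (h : Seg fl E a b τ) : ∀ (f : ℕ) (rest : List ℕ), τ = f :: rest →
    ∃ c, (a, c) ∈ E ∧ FMatch (fl c) f ∧ Seg fl E c b rest := by
  induction h with
  | nil => intro f rest h; exact absurd h (by simp)
  | @step b c σ f₀ hs he hf ih =>
    intro f rest heq
    rcases σ.eq_nil_or_concat with rfl | ⟨σ', f', rfl⟩
    · obtain ⟨rfl, rfl⟩ : f₀ = f ∧ rest = [] := by
        simpa [eq_comm] using heq.symm
      obtain rfl := seg_nil' hs rfl
      exact ⟨c, he, hf, .nil _⟩
    · simp only [List.concat_eq_append] at heq ih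
      rcases σ' with _ | ⟨g, σ''⟩
      · obtain ⟨h1, h2⟩ : f' = f ∧ [f₀] = rest := by simpa using heq
        subst h2
        obtain ⟨cc, hcc, hfm, hseg⟩ := ih f' [] rfl
        obtain rfl := seg_nil' hseg rfl
        exact ⟨cc, hcc, h1 ▸ hfm, by simpa using Seg.step (Seg.nil _) he hf⟩
      · obtain ⟨h1, h2⟩ : g = f ∧ σ'' ++ [f', f₀] = rest := by simpa using heq
        subst h2
        obtain ⟨cc, hcc, hfm, hseg⟩ := ih g (σ'' ++ [f']) rfl
        exact ⟨cc, hcc, h1 ▸ hfm, by simpa using Seg.step hseg he hf⟩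

lemma reaches_nil_inv {ν : Type*} {fl : ν → Option ℕ} {G : Gph ν} {n : ν} {τ : List ℕ}
    (h : Reaches fl G n τ) (hτ : τ = []) : n = G.entry := by
  cases h with
  | entry => rfl
  | step => simp at hτ

lemma reaches_snoc_inv {ν : Type*} {fl : ν → Option ℕ} {G : Gph ν} {n : ν}
    {τ σ : List ℕ} {f : ℕ} (h : Reaches fl G n τ) (hτ : τ = σ ++ [f]) :
    ∃ p, Reaches fl G p σ ∧ (p, n) ∈ G.edges ∧ FMatch (fl n) f := by
  cases h with
  | entry => simp at hτ
  | @step p n σ' f' h he hf =>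
    obtain ⟨rfl, h2⟩ := List.append_inj' hτ rfl
    obtain rfl : f' = f := by simpa using h2
    exact ⟨p, h, he, hf⟩

lemma reaches_acn {ν : Type*} {fl : ν → Option ℕ} {G G' : Gph ν} {n : ν} {τ : List ℕ}
    (h : Reaches fl G n τ) : ∀ n', Reaches fl G' n' τ → ACN fl G G' n n' := by
  induction h with
  | entry =>
    intro n' h'
    rw [reaches_nil_inv h' rfl]
    exact .entry
  | @step a b σ f h he hf ih =>
    intro n' h'
    obtain ⟨p, hp, he', hf'⟩ := reaches_snoc_inv h' rfl
    refine .step (ih p hp) he he' ?_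
    rcases hf with hb | hb
    · exact Or.inl hb
    · rcases hf' with hb' | hb'
      · exact Or.inr (Or.inl hb')
      · exact Or.inr (Or.inr (hb.trans hb'.symm))

/-- Factorization followed by extension recovers extensions of paths: every access
path ρ'→σ ∈ AP(G) with ρ' ∈ AP(G',M) (σ a nonempty field sequence) is represented
in (G',M) # (G/(G',M)). -/
theorem factor_extend_recovers {ν : Type*} (fl : ν → Option ℕ) (G G' : Gph ν)
    (M : Set ν) (ρ' σ : List ℕ) (hσ : σ ≠ [])
    (hAP : ρ' ++ σ ∈ AP fl G G.final) (hρ' : ρ' ∈ AP fl G' M) :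
    ρ' ++ σ ∈
      AP fl (extendSet G' M (factor fl G G' M))
        (extendSet G' M (factor fl G G' M)).final := by
  obtain ⟨nf, hnf, hre⟩ := hAP
  obtain ⟨m, hm, hre'⟩ := hρ'
  obtain ⟨k, hkρ, hseg⟩ := reaches_split hre ρ' σ rfl
  have hACN : ACN fl G G' k m := reaches_acn hkρ m hre'
  obtain ⟨f₁, rest, rfl⟩ : ∃ f r, σ = f :: r := by
    cases σ with
    | nil => exact absurd rfl hσ
    | cons f r => exact ⟨f, r, rfl⟩
  obtain ⟨nj, hedge, hfm, hseg'⟩ := seg_cons hseg f₁ rest rfl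
  set R : Gph ν := ⟨nj, G.edges, G.final⟩ with hRdef
  have hR : R ∈ factor fl G G' M := ⟨k, nj, hedge, ⟨m, hm, hACN⟩, rfl⟩
  have hS : factor fl G G' M ≠ ∅ := fun h => (h ▸ hR : R ∈ (∅ : Set (Gph ν)))
  have hE : extendSet G' M (factor fl G G' M) =
      ⟨G'.entry,
       G'.edges ∪ ⋃ Q ∈ factor fl G G' M,
         (Q.edges ∪ {p : ν × ν | p.1 ∈ M ∧ p.2 = Q.entry}),
       G'.final ∪ ⋃ Q ∈ factor fl G G' M, Q.final⟩ := by
    rw [extendSet, if_neg hS]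
  set E := extendSet G' M (factor fl G G' M) with hEdef
  have hsub : G'.edges ⊆ E.edges := by rw [hE]; exact Set.subset_union_left
  have hsubG : G.edges ⊆ E.edges := by
    rw [hE]
    intro p hp
    exact Or.inr (Set.mem_biUnion hR (Or.inl hp))
  have h1 : Reaches fl E m ρ' := reaches_mono hsub (by rw [hE]) hre'
  have hedgeE : (m, nj) ∈ E.edges := by
    rw [hE]
    exact Or.inr (Set.mem_biUnion hR (Or.inr ⟨hm, rfl⟩))
  have h2 : Reaches fl E nj (ρ' ++ [f₁]) := .step h1 hedgeE hfm
  have h3 : Reaches fl E nf ((ρ' ++ [f₁]) ++ rest) := reaches_seg hsubG hseg' h2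
  refine ⟨nf, ?_, by simpa using h3⟩
  rw [hE]
  exact Or.inr (Set.mem_biUnion hR hnf)
end
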